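/- Let q be an odd prime power. Then every Sylow 2-subgroup of SL₂(F_q) contains a cyclic subgroup of index 2; in particular it contains an abelian normal subgroup of index 2. -/

import Mathlib

/-!
`SL₂(F_q)` has order `q (q - 1) (q + 1)`, and for odd `q` one of `q ± 1` is exactly divisible
by `2`; so a Sylow `2`-subgroup has order `2 ^ (a + 1)` with `2 ^ a` dividing the other factor.
Both `q - 1` and `q + 1` are orders of cyclic subgroups of `SL₂(F_q)`: the diagonal torus
`u ↦ diag(u, u⁻¹)`, and the norm-one units of `F_{q²}` acting by multiplication on
`F_{q²} ≅ F_q²`. Hence `SL₂(F_q)` has an element of order `2 ^ a`. It lies in some Sylow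
`2`-subgroup, all of which are isomorphic, and generates a cyclic subgroup of index `2` there.
-/

open Matrix Subgroup

theorem IsCyclic.exists_orderOf_eq_of_dvd_natCard {α : Type*} [Group α] [IsCyclic α] [Finite α]
    {d : ℕ} (hd : d ∣ Nat.card α) : ∃ g : α, orderOf g = d := by
  obtain ⟨g, hg⟩ := IsCyclic.exists_ofOrder_eq_natCard (α := α)
  exact ⟨g ^ (orderOf g / d), orderOf_pow_orderOf_div (hg ▸ Nat.card_pos.ne') (hg ▸ hd)⟩

theorem Sylow.exists_isCyclic_index_eq_of_orderOf_eq {G : Type*} [Group G] [Finite G] {p : ℕ}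
    [Fact p.Prime] (P : Sylow p G) {a : ℕ} (hP : Nat.card (P : Subgroup G) = p ^ (a + 1))
    {x : G} (hx : orderOf x = p ^ a) :
    ∃ H : Subgroup (P : Subgroup G), IsCyclic H ∧ H.index = p := by
  obtain ⟨Q, hxQ⟩ := (IsPGroup.of_card (by rw [Nat.card_zpowers, hx]) :
    IsPGroup p (zpowers x)).exists_le_sylow
  set y : (P : Subgroup G) := Sylow.equiv Q P ⟨x, hxQ (mem_zpowers x)⟩
  have hy : Nat.card (zpowers y) = p ^ a := by
    rw [Nat.card_zpowers, MulEquiv.orderOf_eq, orderOf_mk, hx]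
  refine ⟨zpowers y, inferInstance,
    Nat.eq_of_mul_eq_mul_left (pow_pos (Fact.out : p.Prime).pos a) ?_⟩
  rw [← hy, card_mul_index, hP, pow_succ, hy]

theorem Nat.factorization_two_mul_of_odd {t : ℕ} (ht : Odd t) : (2 * t).factorization 2 = 1 := by
  rw [Nat.factorization_mul two_ne_zero ht.pos.ne', Finsupp.add_apply,
    Nat.prime_two.factorization_self, Nat.factorization_eq_zero_of_not_dvd ht.not_two_dvd_nat]

theorem Nat.exists_factorization_two_mul_sq_sub_one {q : ℕ} (hq : Odd q) (h1 : 1 < q) :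
    ∃ a, (q * (q ^ 2 - 1)).factorization 2 = a + 1 ∧ (2 ^ a ∣ q - 1 ∨ 2 ^ a ∣ q + 1) := by
  have hv : (q * (q ^ 2 - 1)).factorization 2 =
      (q + 1).factorization 2 + (q - 1).factorization 2 := by
    have hsq : q ^ 2 - 1 = (q + 1) * (q - 1) := by simpa using Nat.sq_sub_sq q 1
    rw [hsq, Nat.factorization_mul (by omega) (mul_ne_zero (by omega) (by omega)),
      Nat.factorization_mul (by omega) (by omega), Finsupp.add_apply, Finsupp.add_apply,
      Nat.factorization_eq_zero_of_not_dvd hq.not_two_dvd_nat, zero_add]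
  obtain ⟨k, rfl⟩ := hq
  rcases Nat.even_or_odd k with ⟨m, rfl⟩ | ⟨m, rfl⟩
  · refine ⟨(2 * (m + m) + 1 - 1).factorization 2, ?_, .inl (Nat.ordProj_dvd _ 2)⟩
    rw [hv, show 2 * (m + m) + 1 + 1 = 2 * (2 * m + 1) by ring,
      Nat.factorization_two_mul_of_odd (odd_two_mul_add_one m), add_comm]
  · refine ⟨(2 * (2 * m + 1) + 1 + 1).factorization 2, ?_, .inr (Nat.ordProj_dvd _ 2)⟩
    rw [hv, show 2 * (2 * m + 1) + 1 - 1 = 2 * (2 * m + 1) by omega,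
      Nat.factorization_two_mul_of_odd (odd_two_mul_add_one m)]

theorem FiniteField.natCard_ker_unitsMap_norm_mul {K L : Type*} [Field K] [Field L]
    [Algebra K L] [Finite L] :
    Nat.card (Units.map (Algebra.norm K (S := L) : L →* K)).ker * (Nat.card K - 1) =
      Nat.card L - 1 := by
  set N : Lˣ →* Kˣ := Units.map (Algebra.norm K (S := L) : L →* K)
  rw [← Nat.card_units K, ← Nat.card_units L, ← N.ker.card_mul_index, Subgroup.index_ker,
    MonoidHom.range_eq_top.2 (FiniteField.unitsMap_norm_surjective K L), Subgroup.card_top]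

namespace Matrix.SpecialLinearGroup

section Card

variable {F : Type*} [Field F] [Fintype F]

theorem natCard_mul_card_sub_one {n : Type*} [Fintype n] [DecidableEq n] [Nonempty n] :
    Nat.card (SpecialLinearGroup n F) * (Fintype.card F - 1) = Nat.card (GL n F) := by
  let det : GL n F →* Fˣ := GeneralLinearGroup.det
  have hrange : toGL.range = det.ker := by
    ext g
    simp only [MonoidHom.mem_range, MonoidHom.mem_ker, Units.ext_iff]
    exact ⟨fun ⟨x, hx⟩ => by simp [← hx, det], fun h => ⟨⟨g, h⟩, rfl⟩⟩
  have hdet : Nat.card det.range = Fintype.card F - 1 := by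
    rw [MonoidHom.range_eq_top.2 GeneralLinearGroup.det_surjective, Subgroup.card_top,
      Nat.card_units, Nat.card_eq_fintype_card]
  rw [← hdet, ← Subgroup.index_ker,
    Nat.card_congr (MonoidHom.ofInjective toGL_injective).toEquiv, hrange,
    Subgroup.card_mul_index]

theorem natCard_fin_two :
    Nat.card (SpecialLinearGroup (Fin 2) F) = Fintype.card F * (Fintype.card F ^ 2 - 1) := by
  have hq : 1 < Fintype.card F := Fintype.one_lt_card
  have h := natCard_mul_card_sub_one (F := F) (n := Fin 2)
  rw [card_GL_field, Fin.prod_univ_two] at h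
  refine Nat.eq_of_mul_eq_mul_right (Nat.sub_pos_of_lt hq) (h.trans ?_)
  rw [Fin.val_zero, Fin.val_one, pow_zero, pow_one, sq (Fintype.card F), ← Nat.mul_sub_one]
  ring

end Card

section Tori

variable {R : Type*} [CommRing R]

def diagUnits : Rˣ →* SpecialLinearGroup (Fin 2) R where
  toFun u := ⟨diagonal ![(u : R), ↑u⁻¹], by simp [det_diagonal]⟩
  map_one' := Subtype.ext <| by simp [← diagonal_one]
  map_mul' u v := Subtype.ext <| by
    show diagonal _ = diagonal _ * diagonal _
    rw [diagonal_mul_diagonal]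
    congr 1; ext i; fin_cases i <;> simp [mul_comm]

@[simp]
theorem coe_diagUnits (u : Rˣ) :
    (diagUnits u : Matrix (Fin 2) (Fin 2) R) = diagonal ![↑u, ↑u⁻¹] :=
  rfl

theorem diagUnits_injective : Function.Injective (diagUnits (R := R)) := fun _ _ h =>
  Units.ext <| by simpa using congr_arg (fun A : SpecialLinearGroup (Fin 2) R => A 0 0) h

variable {S : Type*} [CommRing S] [Algebra R S] {ι : Type*} [Fintype ι] [DecidableEq ι]

noncomputable def normOneUnits (b : Module.Basis ι R S) :
    (Units.map (Algebra.norm R (S := S) : S →* R)).ker →* SpecialLinearGroup ι R where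
  toFun x := ⟨Algebra.leftMulMatrix b (x : Sˣ), by
    rw [← Algebra.norm_eq_matrix_det b]
    simpa using congr_arg Units.val (MonoidHom.mem_ker.1 x.2)⟩
  map_one' := Subtype.ext <| by simp
  map_mul' x y := Subtype.ext <| by
    show Algebra.leftMulMatrix b _ = Algebra.leftMulMatrix b _ * Algebra.leftMulMatrix b _
    simp

theorem normOneUnits_injective (b : Module.Basis ι R S) :
    Function.Injective (normOneUnits b) := fun _ _ h =>
  Subtype.ext <| Units.ext <| Algebra.leftMulMatrix_injective b <| congr_arg Subtype.val h

variable {F : Type*} [Field F] [Fintype F]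

theorem exists_orderOf_eq_of_dvd_card_sub_one {d : ℕ} (hd : d ∣ Fintype.card F - 1) :
    ∃ x : SpecialLinearGroup (Fin 2) F, orderOf x = d := by
  obtain ⟨u, hu⟩ := IsCyclic.exists_orderOf_eq_of_dvd_natCard (α := Fˣ) (d := d)
    (by rwa [Nat.card_units, Nat.card_eq_fintype_card])
  exact ⟨diagUnits u, (orderOf_injective _ diagUnits_injective u).trans hu⟩

theorem exists_orderOf_eq_of_dvd_card_add_one {d : ℕ} (hd : d ∣ Fintype.card F + 1) :
    ∃ x : SpecialLinearGroup (Fin 2) F, orderOf x = d := by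
  have : Fact (ringChar F).Prime := ⟨CharP.char_is_prime F _⟩
  let L := FiniteField.Extension F (ringChar F) 2
  let b : Module.Basis (Fin 2) F L :=
    Module.finBasisOfFinrankEq F L (FiniteField.finrank_extension F _ 2)
  have hN : Nat.card (Units.map (Algebra.norm F (S := L) : L →* F)).ker =
      Fintype.card F + 1 := by
    have h := FiniteField.natCard_ker_unitsMap_norm_mul (K := F) (L := L)
    have hq : 1 < Fintype.card F := Fintype.one_lt_card
    rw [FiniteField.natCard_extension, Nat.card_eq_fintype_card (α := F)] at h
    refine Nat.eq_of_mul_eq_mul_right (Nat.sub_pos_of_lt hq) (h.trans ?_)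
    simpa using Nat.sq_sub_sq (Fintype.card F) 1
  obtain ⟨g, hg⟩ := IsCyclic.exists_orderOf_eq_of_dvd_natCard (hN ▸ hd)
  exact ⟨normOneUnits b g, (orderOf_injective _ (normOneUnits_injective b) g).trans hg⟩

end Tori

end Matrix.SpecialLinearGroup

/-- Let `q` be an odd prime power.  Then every Sylow `2`-subgroup of `SL₂(F_q)` contains a
cyclic subgroup of index `2`; in particular it contains an abelian normal subgroup of
index `2`. -/
theorem sl2_sylow_two_has_cyclic_subgroup_of_index_two
    (F : Type) [Field F] [Fintype F] (hodd : Odd (Fintype.card F))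
    (P : Sylow 2 (Matrix.SpecialLinearGroup (Fin 2) F)) :
    (∃ H : Subgroup ↥(P : Subgroup (Matrix.SpecialLinearGroup (Fin 2) F)),
        IsCyclic ↥H ∧ H.index = 2) ∧
    (∃ K : Subgroup ↥(P : Subgroup (Matrix.SpecialLinearGroup (Fin 2) F)),
        (∀ x ∈ K, ∀ y ∈ K, x * y = y * x) ∧ K.Normal ∧ K.index = 2) := by
  obtain ⟨a, ha, hdvd⟩ := Nat.exists_factorization_two_mul_sq_sub_one hodd Fintype.one_lt_card
  have hP : Nat.card (P : Subgroup (SpecialLinearGroup (Fin 2) F)) = 2 ^ (a + 1) := by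
    rw [P.card_eq_multiplicity, SpecialLinearGroup.natCard_fin_two, ha]
  obtain ⟨x, hx⟩ : ∃ x : SpecialLinearGroup (Fin 2) F, orderOf x = 2 ^ a :=
    hdvd.elim SpecialLinearGroup.exists_orderOf_eq_of_dvd_card_sub_one
      SpecialLinearGroup.exists_orderOf_eq_of_dvd_card_add_one
  obtain ⟨H, hcyc, hindex⟩ := P.exists_isCyclic_index_eq_of_orderOf_eq hP hx
  exact ⟨⟨H, hcyc, hindex⟩, H, fun _ hy _ hz => setLike_mul_comm hy hz,
    normal_of_index_eq_two hindex, hindex⟩
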